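/- arXiv:2109.05128 — 4 statements merged into one kernel-verified Lean document; each statement's English description precedes it below -/
import Mathlib

section
/- Let (Ω, ℱ, P) be a probability space, let X : Ω → ℝ be an integrable random variable, and let α ∈ (0,1). Then the two expressions for the Conditional Value at Risk agree: (1/α) ∫_0^α VaR_{1-γ}(X) dγ = inf_{z ∈ ℝ} { z + (1/α) · E[(X − z)₊] }, where VaR_{1-γ}(X) := inf { z ∈ ℝ : P(X ≥ z) ≤ γ } and (·)₊ denotes the positive part. -/
open MeasureTheory Set

noncomputable def valueAtRisk {Ω : Type*} [MeasurableSpace Ω] (P : Measure Ω)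
    (X : Ω → ℝ) (γ : ℝ) : ℝ :=
  sInf {z : ℝ | (P {ω | z ≤ X ω}).toReal ≤ γ}

section Aux

variable {Ω : Type*} [MeasurableSpace Ω] {P : Measure Ω} [IsProbabilityMeasure P] {X : Ω → ℝ}

/-- The set defining VaR. -/
def varSet (P : Measure Ω) (X : Ω → ℝ) (γ : ℝ) : Set ℝ :=
  {z : ℝ | (P {ω | z ≤ X ω}).toReal ≤ γ}

lemma varSet_nonempty (hX : Measurable X) {γ : ℝ} (hγ : 0 < γ) :
    (varSet P X γ).Nonempty := by
  have hmeas : ∀ n : ℕ, NullMeasurableSet {ω | (n : ℝ) ≤ X ω} P := by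
    intro n
    exact (measurableSet_le measurable_const hX).nullMeasurableSet
  have hanti : Antitone (fun n : ℕ => {ω | (n : ℝ) ≤ X ω}) := by
    intro m n hmn ω hω
    exact le_trans ((Nat.cast_le (α := ℝ)).mpr hmn) hω
  have hempty : (⋂ n : ℕ, {ω | (n : ℝ) ≤ X ω}) = (∅ : Set Ω) := by
    ext ω
    simp only [mem_iInter, mem_setOf_eq, mem_empty_iff_false, iff_false, not_forall, not_le]
    obtain ⟨n, hn⟩ := exists_nat_gt (X ω)
    exact ⟨n, hn⟩
  have htend := tendsto_measure_iInter_atTop hmeas hanti ⟨0, measure_ne_top P _⟩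
  rw [hempty, measure_empty] at htend
  have : ∀ᶠ n : ℕ in Filter.atTop, P {ω | (n : ℝ) ≤ X ω} < ENNReal.ofReal γ := by
    exact htend.eventually_lt_const (by simpa using hγ)
  obtain ⟨n, hn⟩ := this.exists
  refine ⟨(n : ℝ), ?_⟩
  have := (ENNReal.toReal_lt_toReal (measure_ne_top P _) ENNReal.ofReal_ne_top).mpr hn
  rw [ENNReal.toReal_ofReal hγ.le] at this
  exact this.le

lemma varSet_bddBelow {γ : ℝ} (hγ : γ < 1) : BddBelow (varSet P X γ) := by
  have hmono : Monotone (fun n : ℕ => {ω | (-(n : ℝ)) ≤ X ω}) := by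
    intro m n hmn ω hω
    exact le_trans (neg_le_neg ((Nat.cast_le (α := ℝ)).mpr hmn)) hω
  have huniv : (⋃ n : ℕ, {ω | (-(n : ℝ)) ≤ X ω}) = (univ : Set Ω) := by
    ext ω
    simp only [mem_iUnion, mem_setOf_eq, mem_univ, iff_true]
    obtain ⟨n, hn⟩ := exists_nat_gt (-(X ω))
    exact ⟨n, by linarith⟩
  have htend := tendsto_measure_iUnion_atTop (μ := P) hmono
  rw [huniv, measure_univ] at htend
  have : ∀ᶠ n : ℕ in Filter.atTop, ENNReal.ofReal γ < P {ω | (-(n : ℝ)) ≤ X ω} := by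
    refine htend.eventually_const_lt ?_
    exact ENNReal.ofReal_lt_one.mpr hγ
  obtain ⟨n, hn⟩ := this.exists
  refine ⟨-(n : ℝ), ?_⟩
  intro z hz
  by_contra hlt
  push_neg at hlt
  have hsub : {ω | (-(n : ℝ)) ≤ X ω} ⊆ {ω | z ≤ X ω} := fun ω hω => le_trans hlt.le hω
  have := measure_mono (μ := P) hsub
  have h2 : ENNReal.ofReal γ < P {ω | z ≤ X ω} := lt_of_lt_of_le hn this
  have h3 : γ < (P {ω | z ≤ X ω}).toReal := by
    rcases le_or_gt γ 0 with h0 | h0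
    · have hpos : 0 < P {ω | z ≤ X ω} := lt_of_le_of_lt zero_le h2
      have := ENNReal.toReal_pos hpos.ne' (measure_ne_top P _)
      rcases h0.lt_or_eq with h | h
      · exact h.trans this
      · rw [h]; exact this
    · exact (ENNReal.ofReal_lt_iff_lt_toReal h0.le (measure_ne_top P _)).mp h2
  exact absurd hz (not_le.mpr h3)

end Aux

section Aux2

variable {Ω : Type*} [MeasurableSpace Ω] {P : Measure Ω} [IsProbabilityMeasure P] {X : Ω → ℝ}

lemma var_le_iff (hX : Measurable X) {γ : ℝ} (hγ : γ ∈ Set.Ioo (0:ℝ) 1) (t : ℝ) :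
    valueAtRisk P X γ ≤ t ↔ (P {ω | t < X ω}).toReal ≤ γ := by
  have hne := varSet_nonempty (P := P) hX hγ.1
  have hbdd := varSet_bddBelow (P := P) (X := X) hγ.2
  constructor
  · intro h
    -- write {t < X} as increasing union of {t + 1/(n+1) ≤ X}
    have hunion : {ω | t < X ω} = ⋃ n : ℕ, {ω | t + 1/((n:ℝ)+1) ≤ X ω} := by
      ext ω
      simp only [mem_setOf_eq, mem_iUnion]
      constructor
      · intro hω
        obtain ⟨n, hn⟩ := exists_nat_one_div_lt (sub_pos.mpr hω)
        exact ⟨n, by linarith⟩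
      · rintro ⟨n, hn⟩
        have : (0:ℝ) < 1/((n:ℝ)+1) := by positivity
        linarith
    have hmono : Monotone (fun n : ℕ => {ω | t + 1/((n:ℝ)+1) ≤ X ω}) := by
      intro m n hmn ω hω
      have h1 : (1:ℝ)/((n:ℝ)+1) ≤ 1/((m:ℝ)+1) := by
        apply one_div_le_one_div_of_le (by positivity)
        have := (Nat.cast_le (α := ℝ)).mpr hmn
        linarith
      simp only [mem_setOf_eq] at hω ⊢
      linarith
    have hkey : ∀ n : ℕ, P {ω | t + 1/((n:ℝ)+1) ≤ X ω} ≤ ENNReal.ofReal γ := by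
      intro n
      have hpos : (0:ℝ) < 1/((n:ℝ)+1) := by positivity
      have hlt : sInf (varSet P X γ) < t + 1/((n:ℝ)+1) := lt_of_le_of_lt h (by linarith)
      obtain ⟨z, hz, hzlt⟩ := exists_lt_of_csInf_lt hne hlt
      have hsub : {ω | t + 1/((n:ℝ)+1) ≤ X ω} ⊆ {ω | z ≤ X ω} :=
        fun ω hω => le_trans hzlt.le hω
      calc P {ω | t + 1/((n:ℝ)+1) ≤ X ω} ≤ P {ω | z ≤ X ω} := measure_mono hsub
        _ ≤ ENNReal.ofReal γ := by
            rw [← ENNReal.ofReal_toReal (measure_ne_top P {ω | z ≤ X ω})]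
            exact ENNReal.ofReal_le_ofReal hz
    have := hmono.measure_iUnion (μ := P)
    rw [← hunion] at this
    have hle : P {ω | t < X ω} ≤ ENNReal.ofReal γ := by
      rw [this]
      exact iSup_le hkey
    calc (P {ω | t < X ω}).toReal ≤ (ENNReal.ofReal γ).toReal :=
          ENNReal.toReal_mono ENNReal.ofReal_ne_top hle
      _ = γ := ENNReal.toReal_ofReal hγ.1.le
  · intro h
    have hmem : ∀ ε > (0:ℝ), t + ε ∈ varSet P X γ := by
      intro ε hε
      have hsub : {ω | t + ε ≤ X ω} ⊆ {ω | t < X ω} := fun ω hω => by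
        have : (0:ℝ) < ε := hε
        simp only [mem_setOf_eq] at *
        linarith
      exact le_trans (ENNReal.toReal_mono (measure_ne_top P _) (measure_mono hsub)) h
    have : ∀ ε > (0:ℝ), valueAtRisk P X γ ≤ t + ε := fun ε hε => csInf_le hbdd (hmem ε hε)
    exact le_of_forall_pos_le_add this

lemma var_antitoneOn (hX : Measurable X) :
    AntitoneOn (valueAtRisk P X) (Set.Ioo (0:ℝ) 1) := by
  intro γ hγ γ' hγ' hle
  exact csInf_le_csInf (varSet_bddBelow hγ'.2) (varSet_nonempty hX hγ.1)
    (fun z hz => le_trans hz hle)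

end Aux2

section Aux3

variable {Ω : Type*} [MeasurableSpace Ω] {P : Measure Ω} [IsProbabilityMeasure P] {X : Ω → ℝ}

lemma ofReal_max_zero (a : ℝ) : ENNReal.ofReal (max a 0) = ENNReal.ofReal a := by
  rcases le_total a 0 with h | h
  · rw [max_eq_right h, ENNReal.ofReal_zero, ENNReal.ofReal_of_nonpos h]
  · rw [max_eq_left h]

omit [IsProbabilityMeasure P] in
lemma tail_lintegral (hX : Measurable X) (z : ℝ) :
    ∫⁻ ω, ENNReal.ofReal (max (X ω - z) 0) ∂P = ∫⁻ t in Ioi (0:ℝ), P {ω | z + t < X ω} := by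
  rw [lintegral_eq_lintegral_meas_lt P (f := fun ω => max (X ω - z) 0) (Filter.Eventually.of_forall fun ω => le_max_right _ _)
    (((hX.sub measurable_const).max measurable_const).aemeasurable)]
  apply setLIntegral_congr_fun measurableSet_Ioi
  intro t ht
  beta_reduce
  congr 1
  ext ω
  simp only [mem_setOf_eq, lt_max_iff]
  constructor
  · rintro (h | h)
    · linarith
    · exact absurd h (not_lt.mpr (le_of_lt ht))
  · intro h
    left; linarith

lemma exp_pos_part (hXm : Measurable X) (hX : Integrable X P) (z : ℝ) :
    ENNReal.ofReal (∫ ω, max (X ω - z) 0 ∂P) = ∫⁻ t in Ioi (0:ℝ), P {ω | z + t < X ω} := by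
  have hI : Integrable (fun ω => max (X ω - z) 0) P := (hX.sub (integrable_const z)).pos_part
  rw [MeasureTheory.ofReal_integral_eq_lintegral_ofReal hI
    (Filter.Eventually.of_forall fun ω => le_max_right _ _)]
  exact tail_lintegral hXm z

lemma var_layercake (hX : Measurable X) {α : ℝ} (hα : α ∈ Set.Ioo (0:ℝ) 1) (z : ℝ) :
    ∫⁻ γ in Ioo (0:ℝ) α, ENNReal.ofReal (valueAtRisk P X γ - z)
      = ∫⁻ t in Ioi (0:ℝ), min (ENNReal.ofReal α) (P {ω | z + t < X ω}) := by
  set q := valueAtRisk P X with hq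
  have hanti : AntitoneOn q (Ioo (0:ℝ) α) :=
    (var_antitoneOn hX).mono (Ioo_subset_Ioo le_rfl hα.2.le)
  have hqm : AEMeasurable q (volume.restrict (Ioo (0:ℝ) α)) :=
    aemeasurable_restrict_of_antitoneOn measurableSet_Ioo hanti
  have hfm : AEMeasurable (fun γ => max (q γ - z) 0) (volume.restrict (Ioo (0:ℝ) α)) :=
    ((hqm.sub aemeasurable_const).max aemeasurable_const)
  have key := lintegral_eq_lintegral_meas_lt (volume.restrict (Ioo (0:ℝ) α))
    (f := fun γ => max (q γ - z) 0) (Filter.Eventually.of_forall fun γ => le_max_right _ _) hfm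
  have hL : ∫⁻ γ in Ioo (0:ℝ) α, ENNReal.ofReal (q γ - z)
      = ∫⁻ γ in Ioo (0:ℝ) α, ENNReal.ofReal (max (q γ - z) 0) := by
    apply lintegral_congr_ae
    exact Filter.Eventually.of_forall fun γ => (ofReal_max_zero _).symm
  rw [hL, key]
  apply setLIntegral_congr_fun measurableSet_Ioi
  intro t ht
  beta_reduce
  have ht' : (0:ℝ) < t := ht
  set T := (P {ω | z + t < X ω}).toReal with hT
  have hT0 : 0 ≤ T := ENNReal.toReal_nonneg
  have hset : {γ | t < max (q γ - z) 0} ∩ Ioo (0:ℝ) α = Ioo (0:ℝ) (min α T) := by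
    ext γ
    simp only [mem_inter_iff, mem_setOf_eq, mem_Ioo, lt_min_iff]
    constructor
    · rintro ⟨h1, h2, h3⟩
      have hγ1 : γ ∈ Set.Ioo (0:ℝ) 1 := ⟨h2, h3.trans hα.2⟩
      have hmax : t < q γ - z := by
        rcases lt_max_iff.mp h1 with h | h
        · exact h
        · exact absurd h (not_lt.mpr ht'.le)
      have : ¬ q γ ≤ z + t := by intro h; linarith
      rw [var_le_iff hX hγ1 (z + t)] at this
      push_neg at this
      exact ⟨h2, h3, this⟩
    · rintro ⟨h1, h2, h3⟩
      have hγ1 : γ ∈ Set.Ioo (0:ℝ) 1 := ⟨h1, h2.trans hα.2⟩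
      have : ¬ q γ ≤ z + t := by
        rw [var_le_iff hX hγ1 (z + t)]
        push_neg
        exact h3
      push_neg at this
      refine ⟨?_, h1, h2⟩
      rw [lt_max_iff]
      left; linarith
  rw [Measure.restrict_apply' measurableSet_Ioo, hset, Real.volume_Ioo, sub_zero]
  have hmin : ENNReal.ofReal (min α T) = min (ENNReal.ofReal α) (ENNReal.ofReal T) := by
    rcases le_total α T with h | h
    · rw [min_eq_left h, min_eq_left (ENNReal.ofReal_le_ofReal h)]
    · rw [min_eq_right h, min_eq_right (ENNReal.ofReal_le_ofReal h)]
  rw [hmin, hT, ENNReal.ofReal_toReal (measure_ne_top P _)]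

end Aux3

lemma cvar_main_meas {Ω : Type*} [MeasurableSpace Ω] (P : Measure Ω) [IsProbabilityMeasure P]
    (X : Ω → ℝ) (hXm : Measurable X) (hX : Integrable X P) (α : ℝ)
    (hα : α ∈ Set.Ioo (0 : ℝ) 1) :
    (1 / α) * ∫ γ in (0 : ℝ)..α, valueAtRisk P X γ
      = sInf {v : ℝ | ∃ z : ℝ, v = z + (1 / α) * ∫ ω, max (X ω - z) 0 ∂P} := by
  have hα0 : (0:ℝ) < α := hα.1
  set q := valueAtRisk P X with hqdef
  set zs := q α with hzs
  set E : ℝ → ℝ := fun z => ∫ ω, max (X ω - z) 0 ∂P with hEdef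
  have hE0 : ∀ z, 0 ≤ E z := fun z => integral_nonneg fun ω => le_max_right _ _
  have key1 : ∀ z, ∫⁻ γ in Ioo (0:ℝ) α, ENNReal.ofReal (q γ - z)
      = ∫⁻ t in Ioi (0:ℝ), min (ENNReal.ofReal α) (P {ω | z + t < X ω}) :=
    fun z => var_layercake hXm hα z
  have key2 : ∀ z, ENNReal.ofReal (E z) = ∫⁻ t in Ioi (0:ℝ), P {ω | z + t < X ω} :=
    fun z => exp_pos_part hXm hX z
  -- q ≥ zs on Ioo 0 α
  have hql : ∀ γ ∈ Ioo (0:ℝ) α, zs ≤ q γ := fun γ hγ =>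
    var_antitoneOn hXm ⟨hγ.1, hγ.2.trans hα.2⟩ hα hγ.2.le
  -- equality of lintegrals at zs
  have h1 : (P {ω | zs < X ω}).toReal ≤ α := (var_le_iff hXm hα zs).mp le_rfl
  have h2 : P {ω | zs < X ω} ≤ ENNReal.ofReal α := by
    rw [← ENNReal.ofReal_toReal (measure_ne_top P {ω | zs < X ω})]
    exact ENNReal.ofReal_le_ofReal h1
  have keyzs : ∫⁻ γ in Ioo (0:ℝ) α, ENNReal.ofReal (q γ - zs) = ENNReal.ofReal (E zs) := by
    rw [key1 zs, key2 zs]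
    apply setLIntegral_congr_fun measurableSet_Ioi
    intro t ht
    apply min_eq_right
    refine le_trans (measure_mono ?_) h2
    intro ω hω
    have ht' : (0:ℝ) < t := ht
    simp only [mem_setOf_eq] at *
    linarith
  -- measurability
  have hanti : AntitoneOn q (Ioo (0:ℝ) α) :=
    (var_antitoneOn hXm).mono (Ioo_subset_Ioo le_rfl hα.2.le)
  have hqm : AEMeasurable q (volume.restrict (Ioo (0:ℝ) α)) :=
    aemeasurable_restrict_of_antitoneOn measurableSet_Ioo hanti
  have hgsm : AEStronglyMeasurable (fun γ => q γ - zs) (volume.restrict (Ioo (0:ℝ) α)) :=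
    (hqm.sub aemeasurable_const).aestronglyMeasurable
  have hnn : 0 ≤ᵐ[volume.restrict (Ioo (0:ℝ) α)] (fun γ => q γ - zs) :=
    (ae_restrict_mem measurableSet_Ioo).mono fun γ hγ => sub_nonneg.mpr (hql γ hγ)
  -- integrability of q on Ioo 0 α
  have hInt : Integrable (fun γ => q γ - zs) (volume.restrict (Ioo (0:ℝ) α)) := by
    refine ⟨hgsm, ?_⟩
    rw [hasFiniteIntegral_iff_ofReal hnn, keyzs]
    exact ENNReal.ofReal_lt_top
  have hIntq : IntegrableOn q (Ioo (0:ℝ) α) volume := by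
    have h := hInt.add (integrable_const zs)
    have he : ((fun γ => q γ - zs) + fun _ => zs) = q := by funext γ; simp
    rwa [he] at h
  have hvolIoo : (volume (Ioo (0:ℝ) α)) < ⊤ := by
    rw [Real.volume_Ioo]; exact ENNReal.ofReal_lt_top
  have hIntc : ∀ z : ℝ, IntegrableOn (fun _ => z) (Ioo (0:ℝ) α) volume := fun z =>
    integrableOn_const hvolIoo.ne
  have hsubz : ∀ z : ℝ, ∫ γ in Ioo (0:ℝ) α, (q γ - z) = (∫ γ in Ioo (0:ℝ) α, q γ) - α * z := by
    intro z
    rw [integral_sub hIntq (hIntc z), setIntegral_const, Real.volume_real_Ioo_of_le hα0.le, sub_zero,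
      smul_eq_mul]
  -- real integral identity at zs
  have hreal : ∫ γ in Ioo (0:ℝ) α, (q γ - zs) = E zs := by
    rw [integral_eq_lintegral_of_nonneg_ae hnn hgsm, keyzs, ENNReal.toReal_ofReal (hE0 zs)]
  -- bound for general z
  have hbound : ∀ z : ℝ, (∫ γ in Ioo (0:ℝ) α, q γ) ≤ α * z + E z := by
    intro z
    have hIz : Integrable (fun γ => q γ - z) (volume.restrict (Ioo (0:ℝ) α)) :=
      hIntq.sub (hIntc z)
    have hposle : ∫ γ in Ioo (0:ℝ) α, (q γ - z) ≤ ∫ γ in Ioo (0:ℝ) α, max (q γ - z) 0 :=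
      integral_mono hIz hIz.pos_part (fun γ => le_max_left _ _)
    have hposeq : ∫ γ in Ioo (0:ℝ) α, max (q γ - z) 0
        = (∫⁻ γ in Ioo (0:ℝ) α, ENNReal.ofReal (q γ - z)).toReal := by
      rw [integral_eq_lintegral_of_nonneg_ae (f := fun γ => max (q γ - z) 0)
        (Filter.Eventually.of_forall fun γ => le_max_right _ _)
        ((hqm.sub aemeasurable_const).max aemeasurable_const).aestronglyMeasurable]
      congr 1
      exact lintegral_congr_ae (Filter.Eventually.of_forall fun γ => ofReal_max_zero _)
    have hlint_le : (∫⁻ γ in Ioo (0:ℝ) α, ENNReal.ofReal (q γ - z)) ≤ ENNReal.ofReal (E z) := by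
      rw [key1 z, key2 z]
      exact lintegral_mono fun t => min_le_right _ _
    have htoReal : (∫⁻ γ in Ioo (0:ℝ) α, ENNReal.ofReal (q γ - z)).toReal ≤ E z := by
      have := ENNReal.toReal_mono ENNReal.ofReal_ne_top hlint_le
      rwa [ENNReal.toReal_ofReal (hE0 z)] at this
    have := (hsubz z) ▸ (hposle.trans (hposeq ▸ htoReal) :
      ∫ γ in Ioo (0:ℝ) α, (q γ - z) ≤ E z)
    linarith
  -- interval integral to set integral
  have hII : ∫ γ in (0:ℝ)..α, q γ = ∫ γ in Ioo (0:ℝ) α, q γ := by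
    rw [intervalIntegral.integral_of_le hα0.le, MeasureTheory.integral_Ioc_eq_integral_Ioo]
  have hsetq : ∫ γ in Ioo (0:ℝ) α, q γ = α * zs + E zs := by
    have := hreal
    rw [hsubz zs] at this
    linarith
  have hval : (1/α) * ∫ γ in (0:ℝ)..α, q γ = zs + (1/α) * E zs := by
    rw [hII, hsetq]
    field_simp
  set S : Set ℝ := {v : ℝ | ∃ z : ℝ, v = z + (1 / α) * E z} with hS
  have hmem : zs + (1/α) * E zs ∈ S := ⟨zs, rfl⟩
  have hlb : ∀ v ∈ S, (1/α) * ∫ γ in (0:ℝ)..α, q γ ≤ v := by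
    rintro v ⟨z, rfl⟩
    rw [hII]
    have hb := hbound z
    have h1α : (0:ℝ) < 1/α := one_div_pos.mpr hα0
    have := mul_le_mul_of_nonneg_left hb h1α.le
    calc (1/α) * ∫ γ in Ioo (0:ℝ) α, q γ ≤ (1/α) * (α * z + E z) := this
      _ = z + (1/α) * E z := by field_simp
  refine le_antisymm (le_csInf ⟨_, hmem⟩ hlb) ?_
  rw [hval]
  exact csInf_le ⟨(1/α) * ∫ γ in (0:ℝ)..α, q γ, hlb⟩ hmem

/-- The two expressions for the Conditional Value at Risk agree:
`(1/α) ∫_0^α VaR_{1-γ}(X) dγ = inf_z { z + (1/α) E[(X - z)₊] }`. -/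
theorem cvar_integral_eq_rockafellar_uryasev
    {Ω : Type*} [MeasurableSpace Ω] (P : Measure Ω) [IsProbabilityMeasure P]
    (X : Ω → ℝ) (hX : Integrable X P) (α : ℝ) (hα : α ∈ Set.Ioo (0 : ℝ) 1) :
    (1 / α) * ∫ γ in (0 : ℝ)..α, valueAtRisk P X γ
      = sInf {v : ℝ | ∃ z : ℝ, v = z + (1 / α) * ∫ ω, max (X ω - z) 0 ∂P} := by
  set X' := hX.1.mk X with hX'def
  have hX'm : Measurable X' := hX.1.stronglyMeasurable_mk.measurable
  have hae : X =ᵐ[P] X' := hX.1.ae_eq_mk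
  have hX' : Integrable X' P := hX.congr hae
  have hvar : ∀ γ : ℝ, valueAtRisk P X γ = valueAtRisk P X' γ := by
    intro γ
    unfold valueAtRisk
    congr 1
    ext z
    have hmeq : P {ω | z ≤ X ω} = P {ω | z ≤ X' ω} := by
      apply measure_congr
      filter_upwards [hae] with ω h
      change (z ≤ X ω) = (z ≤ X' ω)
      rw [h]
    simp only [mem_setOf_eq, hmeq]
  have hint : ∀ z : ℝ, ∫ ω, max (X ω - z) 0 ∂P = ∫ ω, max (X' ω - z) 0 ∂P := by
    intro z
    apply integral_congr_ae
    filter_upwards [hae] with ω h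
    rw [h]
  have hiv : ∫ γ in (0:ℝ)..α, valueAtRisk P X γ = ∫ γ in (0:ℝ)..α, valueAtRisk P X' γ := by
    apply intervalIntegral.integral_congr
    intro γ _
    exact hvar γ
  rw [hiv]
  have hsets : {v : ℝ | ∃ z : ℝ, v = z + (1 / α) * ∫ ω, max (X ω - z) 0 ∂P}
      = {v : ℝ | ∃ z : ℝ, v = z + (1 / α) * ∫ ω, max (X' ω - z) 0 ∂P} := by
    ext v
    simp only [mem_setOf_eq, hint]
  rw [hsets]
  exact cvar_main_meas P X' hX'm hX' α hα
end

section
/- Let n ≥ 1, let p : Fin n → ℝ be a probability vector (p_i ≥ 0 for all i and Σ_i p_i = 1), let ξ : Fin n → ℝ, and let α ∈ (0,1]. Then inf_{z ∈ ℝ} { z + (1/α) Σ_i p_i · max(ξ_i − z, 0) } = sup { Σ_i q_i ξ_i : q : Fin n → ℝ, q_i ≥ 0 for all i, Σ_i q_i = 1, q_i ≤ p_i/α for all i }; i.e., the variational form of CVaR equals its dual representation as a maximum of expectations over the CVaR ambiguity set. -/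
/-!
Weak duality: for every feasible `q` and every `z`,
`∑ qᵢ ξᵢ = z + ∑ qᵢ (ξᵢ - z) ≤ z + ∑ (pᵢ / α) (ξᵢ - z)⁺`.
Equality holds when `z` is an `α`-upper quantile of `ξ` under `p` and `q` puts the full
weight `pᵢ / α` above `z`, nothing below `z`, and the remaining mass on the atom at `z`;
so the infimum and the supremum are attained at a common value.
-/

open Finset

theorem csInf_eq_csSup_of_forall_le_of_mem {β : Type*} [ConditionallyCompleteLattice β]
    {F D : Set β} {a : β} (h : ∀ d ∈ D, ∀ f ∈ F, d ≤ f) (haF : a ∈ F) (haD : a ∈ D) :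
    sInf F = sSup D :=
  (IsLeast.csInf_eq ⟨haF, fun f hf => h a haD f hf⟩).trans
    (IsGreatest.csSup_eq ⟨haD, fun d hd => h d hd a haF⟩).symm

variable {ι : Type*} [Fintype ι]

/-- The Rockafellar–Uryasev objective. -/
noncomputable def cvarObjective (p ξ : ι → ℝ) (α z : ℝ) : ℝ :=
  z + (1 / α) * ∑ i, p i * max (ξ i - z) 0

theorem sum_mul_eq_add_sum_mul_sub {q : ι → ℝ} (hq : ∑ i, q i = 1) (ξ : ι → ℝ) (z : ℝ) :
    ∑ i, q i * ξ i = z + ∑ i, q i * (ξ i - z) := by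
  simp only [mul_sub, sum_sub_distrib, ← sum_mul, hq]
  ring

theorem sum_mul_le_cvarObjective {p q ξ : ι → ℝ} {α : ℝ} (hq0 : ∀ i, 0 ≤ q i)
    (hq1 : ∑ i, q i = 1) (hqp : ∀ i, q i ≤ p i / α) (z : ℝ) :
    ∑ i, q i * ξ i ≤ cvarObjective p ξ α z := by
  rw [cvarObjective, sum_mul_eq_add_sum_mul_sub hq1 ξ z, mul_sum]
  refine (add_le_add_iff_left z).2 (sum_le_sum fun i _ => ?_)
  calc q i * (ξ i - z) ≤ q i * max (ξ i - z) 0 :=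
        mul_le_mul_of_nonneg_left (le_max_left _ _) (hq0 i)
    _ ≤ p i / α * max (ξ i - z) 0 := mul_le_mul_of_nonneg_right (hqp i) (le_max_right _ _)
    _ = 1 / α * (p i * max (ξ i - z) 0) := by ring

theorem sum_mul_eq_cvarObjective {p q ξ : ι → ℝ} {α z : ℝ} (hq1 : ∑ i, q i = 1)
    (hslack : ∀ i, q i * (ξ i - z) = p i / α * max (ξ i - z) 0) :
    ∑ i, q i * ξ i = cvarObjective p ξ α z := by
  rw [cvarObjective, sum_mul_eq_add_sum_mul_sub hq1 ξ z, mul_sum]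
  congr 1
  refine sum_congr rfl fun i _ => ?_
  rw [hslack]
  ring

/-- `z` is an upper `α`-quantile; take the largest value of `ξ` whose upper tail
`{z ≤ ξ}` still carries mass at least `α`. -/
theorem exists_sum_lt_le_le_sum_le {p ξ : ι → ℝ} {α : ℝ} (hα : 0 < α)
    (hαp : α ≤ ∑ i, p i) :
    ∃ z, ∑ i with z < ξ i, p i ≤ α ∧ α ≤ ∑ i with z ≤ ξ i, p i := by
  have hne : (univ : Finset ι).Nonempty := nonempty_of_sum_ne_zero (f := p) (by linarith)
  obtain ⟨i₀, -, hi₀⟩ := exists_min_image univ ξ hne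
  have hT : ({j | α ≤ ∑ i with ξ j ≤ ξ i, p i} : Finset ι).Nonempty :=
    ⟨i₀, by
      rwa [mem_filter, filter_true_of_mem fun i _ => hi₀ i (mem_univ i),
        and_iff_right (mem_univ _)]⟩
  obtain ⟨j, hjT, hjmax⟩ := exists_max_image _ ξ hT
  refine ⟨ξ j, ?_, (mem_filter.1 hjT).2⟩
  by_contra! hS
  have hU : ({i | ξ j < ξ i} : Finset ι).Nonempty := by
    by_contra! hU
    rw [hU, sum_empty] at hS
    linarith
  obtain ⟨k, hkU, hkmin⟩ := exists_min_image _ ξ hU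
  have hjk : ξ j < ξ k := (mem_filter.1 hkU).2
  have hk : α ≤ ∑ i with ξ k ≤ ξ i, p i := by
    rw [filter_congr fun i _ =>
      ⟨hjk.trans_le, fun h => hkmin i (mem_filter.2 ⟨mem_univ _, h⟩)⟩]
    exact hS.le
  exact (hjmax k (mem_filter.2 ⟨mem_univ _, hk⟩)).not_gt hjk

theorem exists_weight_of_sum_lt_le_of_le_sum_le {p ξ : ι → ℝ} (hp : ∀ i, 0 ≤ p i) {α z : ℝ}
    (hgt : ∑ i with z < ξ i, p i ≤ α) (hge : α ≤ ∑ i with z ≤ ξ i, p i) :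
    ∃ w : ι → ℝ, (∀ i, 0 ≤ w i ∧ w i ≤ 1) ∧ ∑ i, p i * w i = α ∧
      ∀ i, w i * (ξ i - z) = max (ξ i - z) 0 := by
  set S := ∑ i with z < ξ i, p i
  set M := ∑ i with ξ i = z, p i
  have hM0 : 0 ≤ M := sum_nonneg fun i _ => hp i
  have hSM : ∑ i with z ≤ ξ i, p i = S + M := by
    simp only [S, M, sum_filter, ← sum_add_distrib]
    refine sum_congr rfl fun i _ => ?_
    rcases lt_trichotomy z (ξ i) with h | rfl | h
    · simp [h, h.le, h.ne']
    · simp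
    · simp [h.ne, not_le.2 h, not_lt.2 h.le]
  set θ := (α - S) / M
  have hθM : θ * M = α - S := by
    rcases hM0.eq_or_lt with hM | hM
    · simp only [θ, ← hM, mul_zero]
      linarith
    · exact div_mul_cancel₀ _ hM.ne'
  refine ⟨fun i => if z < ξ i then 1 else if ξ i = z then θ else 0, fun i => ?_, ?_, fun i => ?_⟩
  · have hθ0 : 0 ≤ θ := div_nonneg (by linarith) hM0
    have hθ1 : θ ≤ 1 := div_le_one_of_le₀ (by linarith) hM0
    dsimp only
    split_ifs <;> simp [hθ0, hθ1]
  · calc ∑ i, p i * (if z < ξ i then 1 else if ξ i = z then θ else 0)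
          = S + θ * M := by
            simp only [S, M, sum_filter, mul_sum, ← sum_add_distrib]
            refine sum_congr rfl fun i _ => ?_
            rcases lt_trichotomy z (ξ i) with h | rfl | h
            · simp [h, h.ne']
            · simp [mul_comm]
            · simp [h.ne, not_lt.2 h.le]
      _ = α := by linarith
  · rcases lt_trichotomy z (ξ i) with h | h | h
    · simp [h, h.le]
    · simp [h]
    · simp [not_lt.2 h.le, h.ne, (sub_neg.2 h).le]

theorem exists_cvar_dual_optimal {p ξ : ι → ℝ} (hp : ∀ i, 0 ≤ p i) {α z : ℝ} (hα : 0 < α)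
    (hgt : ∑ i with z < ξ i, p i ≤ α) (hge : α ≤ ∑ i with z ≤ ξ i, p i) :
    ∃ q : ι → ℝ, (∀ i, 0 ≤ q i) ∧ ∑ i, q i = 1 ∧ (∀ i, q i ≤ p i / α) ∧
      ∑ i, q i * ξ i = cvarObjective p ξ α z := by
  obtain ⟨w, hw, hpw, hslack⟩ := exists_weight_of_sum_lt_le_of_le_sum_le hp hgt hge
  have hpα : ∀ i, 0 ≤ p i / α := fun i => div_nonneg (hp i) hα.le
  have hq1 : ∑ i, p i / α * w i = 1 := by
    simp only [div_mul_eq_mul_div, ← sum_div, hpw, div_self hα.ne']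
  refine ⟨fun i => p i / α * w i, fun i => mul_nonneg (hpα i) (hw i).1, hq1,
    fun i => mul_le_of_le_one_right (hpα i) (hw i).2, sum_mul_eq_cvarObjective hq1 fun i => ?_⟩
  rw [mul_assoc, hslack]

theorem cvar_variational_eq_dual_general (n : ℕ) (p ξ : Fin n → ℝ)
    (hp : ∀ i, 0 ≤ p i) (hsum : ∑ i, p i = 1) (α : ℝ) (hα : α ∈ Set.Ioc (0 : ℝ) 1) :
    sInf {v : ℝ | ∃ z : ℝ, v = z + (1 / α) * ∑ i, p i * max (ξ i - z) 0}
      = sSup {v : ℝ | ∃ q : Fin n → ℝ, (∀ i, 0 ≤ q i) ∧ (∑ i, q i = 1) ∧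
          (∀ i, q i ≤ p i / α) ∧ v = ∑ i, q i * ξ i} := by
  obtain ⟨z, hgt, hge⟩ := exists_sum_lt_le_le_sum_le (p := p) (ξ := ξ) hα.1 (hsum ▸ hα.2)
  obtain ⟨q, hq0, hq1, hqp, heq⟩ := exists_cvar_dual_optimal hp hα.1 hgt hge
  refine csInf_eq_csSup_of_forall_le_of_mem ?_ ⟨z, heq⟩ ⟨q, hq0, hq1, hqp, rfl⟩
  rintro _ ⟨q', hq0', hq1', hqp', rfl⟩ _ ⟨z', rfl⟩
  exact sum_mul_le_cvarObjective hq0' hq1' hqp' z'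

/-- The variational (Rockafellar–Uryasev) form of the discrete CVaR equals its dual
representation as a supremum of expectations over the CVaR ambiguity set. -/
theorem cvar_variational_eq_dual (n : ℕ) (hn : 1 ≤ n) (p ξ : Fin n → ℝ)
    (hp : ∀ i, 0 ≤ p i) (hsum : ∑ i, p i = 1) (α : ℝ) (hα : α ∈ Set.Ioc (0 : ℝ) 1) :
    sInf {v : ℝ | ∃ z : ℝ, v = z + (1 / α) * ∑ i, p i * max (ξ i - z) 0}
      = sSup {v : ℝ | ∃ q : Fin n → ℝ, (∀ i, 0 ≤ q i) ∧ (∑ i, q i = 1) ∧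
          (∀ i, q i ≤ p i / α) ∧ v = ∑ i, q i * ξ i} :=
  cvar_variational_eq_dual_general n p ξ hp hsum α hα
end

section
/- Strong duality for the CVaR linear program: let n ≥ 1, let p : Fin n → ℝ be a probability vector (p_i ≥ 0, Σ_i p_i = 1), let ξ : Fin n → ℝ, and let α ∈ (0,1]. Then sup { Σ_j q_j ξ_j : q_j ≥ 0, Σ_j q_j = 1, q_j ≤ p_j/α for all j } = inf { −σ + (1/α) Σ_j p_j μ⁻_j : σ ∈ ℝ, μ⁺, μ⁻ : Fin n → ℝ, μ⁺_j ≥ 0, μ⁻_j ≥ 0, and ξ_j ≤ −σ − μ⁺_j + μ⁻_j for all j }, and the infimum is attained. -/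
open Finset

lemma cvar_exists (n : ℕ) (hn : 1 ≤ n) (p ξ : Fin n → ℝ) (hp : ∀ i, 0 ≤ p i)
    (hsum : ∑ i, p i = 1) (α : ℝ) (hα0 : 0 < α) (hα1 : α ≤ 1) :
    ∃ V : ℝ,
      (∃ q : Fin n → ℝ, (∀ j, 0 ≤ q j) ∧ (∑ j, q j = 1) ∧ (∀ j, q j ≤ p j / α) ∧
        V = ∑ j, q j * ξ j) ∧
      (∃ (σ : ℝ) (μp μm : Fin n → ℝ), (∀ j, 0 ≤ μp j) ∧ (∀ j, 0 ≤ μm j) ∧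
        (∀ j, ξ j ≤ -σ - μp j + μm j) ∧ V = -σ + (1 / α) * ∑ j, p j * μm j) := by
  have hne : (univ : Finset (Fin n)).Nonempty := univ_nonempty_iff.mpr (Fin.pos_iff_nonempty.mp hn)
  set S : Finset ℝ := Finset.image ξ univ with hS
  have hSne : S.Nonempty := hne.image ξ
  set F : ℝ → ℝ := fun s => ∑ j ∈ univ.filter (fun j => s < ξ j), p j with hF
  set T : Finset ℝ := S.filter (fun s => F s ≤ α) with hT
  have hTne : T.Nonempty := by
    refine ⟨S.max' hSne, ?_⟩
    rw [hT, mem_filter]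
    refine ⟨S.max'_mem hSne, ?_⟩
    have hemp : univ.filter (fun j => S.max' hSne < ξ j) = ∅ := by
      apply filter_eq_empty_iff.mpr
      intro j _
      exact not_lt.mpr (S.le_max' (ξ j) (mem_image_of_mem ξ (mem_univ j)))
    have : F (S.max' hSne) = 0 := by
      rw [hF]; dsimp only; rw [hemp, Finset.sum_empty]
    rw [this]; exact le_of_lt hα0
  set t : ℝ := T.min' hTne with ht
  have htT : t ∈ T := T.min'_mem hTne
  set A : Finset (Fin n) := univ.filter (fun j => t < ξ j) with hA
  set B : Finset (Fin n) := univ.filter (fun j => ξ j = t) with hB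
  set a : ℝ := ∑ j ∈ A, p j with ha
  set b : ℝ := ∑ j ∈ B, p j with hb
  have haα : a ≤ α := by
    rw [hT, mem_filter] at htT; exact htT.2
  have hb0 : 0 ≤ b := Finset.sum_nonneg fun j _ => hp j
  -- split of the "≥ t" part
  have hsplit : ∀ (f : Fin n → ℝ),
      ∑ j ∈ univ.filter (fun j => t ≤ ξ j), f j = ∑ j ∈ A, f j + ∑ j ∈ B, f j := by
    intro f
    rw [← Finset.sum_filter_add_sum_filter_not (univ.filter (fun j => t ≤ ξ j))
      (fun j => t < ξ j) f]
    congr 1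
    · refine Finset.sum_congr ?_ (fun _ _ => rfl)
      rw [Finset.filter_filter, hA]
      ext j
      simp only [mem_filter, mem_univ, true_and]
      exact ⟨fun h => h.2, fun h => ⟨le_of_lt h, h⟩⟩
    · refine Finset.sum_congr ?_ (fun _ _ => rfl)
      rw [Finset.filter_filter, hB]
      ext j
      simp only [mem_filter, mem_univ, true_and]
      constructor
      · rintro ⟨h1, h2⟩; exact le_antisymm (not_lt.mp h2) h1
      · rintro h; exact ⟨le_of_eq h.symm, not_lt.mpr (le_of_eq h)⟩
  have hab : α ≤ a + b := by
    by_contra hcon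
    push_neg at hcon
    have hab' : ∑ j ∈ univ.filter (fun j => t ≤ ξ j), p j = a + b := hsplit p
    by_cases hlow : ∀ s ∈ S, t ≤ s
    · have : univ.filter (fun j => t ≤ ξ j) = univ := by
        apply Finset.filter_true_of_mem
        intro j _
        exact hlow (ξ j) (mem_image_of_mem ξ (mem_univ j))
      rw [this, hsum] at hab'
      linarith
    · push_neg at hlow
      obtain ⟨s0, hs0S, hs0t⟩ := hlow
      have hS'ne : (S.filter (fun s => s < t)).Nonempty := ⟨s0, mem_filter.mpr ⟨hs0S, hs0t⟩⟩
      set t' : ℝ := (S.filter (fun s => s < t)).max' hS'ne with ht'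
      have ht'mem := (S.filter (fun s => s < t)).max'_mem hS'ne
      rw [mem_filter] at ht'mem
      have hset : univ.filter (fun j => t' < ξ j) = univ.filter (fun j => t ≤ ξ j) := by
        ext j
        simp only [mem_filter, mem_univ, true_and]
        constructor
        · intro h
          by_contra hcc
          push_neg at hcc
          have hxj : ξ j ≤ t' := Finset.le_max' (S.filter (fun s => s < t)) (ξ j)
            (mem_filter.mpr ⟨mem_image_of_mem ξ (mem_univ j), hcc⟩)
          exact absurd h (not_lt.mpr hxj)
        · intro h; exact lt_of_lt_of_le ht'mem.2 h
      have hFt' : F t' ≤ α := by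
        rw [hF]; dsimp only; rw [hset, hab']; linarith
      have hmem : t' ∈ T := by rw [hT, mem_filter]; exact ⟨ht'mem.1, hFt'⟩
      have := T.min'_le t' hmem
      rw [← ht] at this
      exact absurd ht'mem.2 (not_lt.mpr this)
  -- the primal solution
  set c : ℝ := (α - a) / (α * b) with hc
  have hc0 : 0 ≤ c := div_nonneg (by linarith) (mul_nonneg (le_of_lt hα0) hb0)
  have hcα : c ≤ 1 / α := by
    rcases eq_or_lt_of_le hb0 with hbz | hbpos
    · rw [hc, ← hbz, mul_zero, div_zero]
      exact le_of_lt (one_div_pos.mpr hα0)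
    · rw [hc, div_le_div_iff₀ (by positivity) hα0, one_mul]
      nlinarith
  have hcb : c * b = (α - a) / α := by
    rcases eq_or_lt_of_le hb0 with hbz | hbpos
    · have hαa : α = a := le_antisymm (by linarith [hab, hbz]) haα
      rw [← hbz, mul_zero, hαa, sub_self, zero_div]
    · rw [hc]; field_simp
  set q : Fin n → ℝ := fun j => if t < ξ j then p j / α else if ξ j = t then p j * c else 0
    with hq
  have hq0 : ∀ j, 0 ≤ q j := by
    intro j
    rw [hq]
    dsimp only
    split_ifs
    · exact div_nonneg (hp j) (le_of_lt hα0)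
    · exact mul_nonneg (hp j) hc0
    · exact le_refl 0
  have hqle : ∀ j, q j ≤ p j / α := by
    intro j
    rw [hq]
    dsimp only
    split_ifs
    · exact le_refl _
    · calc p j * c ≤ p j * (1 / α) := mul_le_mul_of_nonneg_left hcα (hp j)
        _ = p j / α := by ring
    · exact div_nonneg (hp j) (le_of_lt hα0)
  -- generic decomposition of sums of q * f
  have hqsum : ∀ (f : Fin n → ℝ),
      ∑ j, q j * f j = ∑ j ∈ A, (p j / α) * f j + ∑ j ∈ B, (p j * c) * f j := by
    intro f
    rw [← Finset.sum_filter_add_sum_filter_not univ (fun j => t ≤ ξ j) (fun j => q j * f j)]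
    have hzero : ∑ j ∈ univ.filter (fun j => ¬ t ≤ ξ j), q j * f j = 0 := by
      apply Finset.sum_eq_zero
      intro j hj
      rw [mem_filter] at hj
      have h1 : ¬ t < ξ j := fun h => hj.2 (le_of_lt h)
      have h2 : ¬ ξ j = t := fun h => hj.2 (le_of_eq h.symm)
      rw [hq]; dsimp only; rw [if_neg h1, if_neg h2, zero_mul]
    rw [hzero, add_zero, hsplit (fun j => q j * f j)]
    congr 1
    · apply Finset.sum_congr rfl
      intro j hj
      rw [hA, mem_filter] at hj
      rw [hq]; dsimp only; rw [if_pos hj.2]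
    · apply Finset.sum_congr rfl
      intro j hj
      rw [hB, mem_filter] at hj
      have h1 : ¬ t < ξ j := not_lt.mpr (le_of_eq hj.2)
      rw [hq]; dsimp only; rw [if_neg h1, if_pos hj.2]
  have hqsum1 : ∑ j, q j = 1 := by
    have := hqsum (fun _ => 1)
    simp only [mul_one] at this
    rw [this]
    have h1 : ∑ j ∈ A, p j / α = a / α := by rw [ha, Finset.sum_div]
    have h2 : ∑ j ∈ B, p j * c = b * c := by rw [hb, Finset.sum_mul]
    rw [h1, h2, mul_comm b c, hcb]
    field_simp
    ring
  -- value
  set V : ℝ := ∑ j, q j * ξ j with hV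
  refine ⟨V, ⟨q, hq0, hqsum1, hqle, rfl⟩, ⟨-t, (fun _ => 0), (fun j => max (ξ j - t) 0),
    fun _ => le_refl 0, fun j => le_max_right _ _, ?_, ?_⟩⟩
  · intro j
    simp only [neg_neg, sub_zero]
    rcases le_or_gt (ξ j) t with h | h
    · linarith [le_max_right (ξ j - t) (0:ℝ)]
    · rw [max_eq_left (by linarith)]; linarith
  · -- V = t + (1/α) * ∑ p_j * max(ξ_j - t, 0)
    have hmaxsum : ∑ j, p j * max (ξ j - t) 0 = ∑ j ∈ A, p j * (ξ j - t) := by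
      rw [← Finset.sum_filter_add_sum_filter_not univ (fun j => t < ξ j)
        (fun j => p j * max (ξ j - t) 0)]
      have hz : ∑ j ∈ univ.filter (fun j => ¬ t < ξ j), p j * max (ξ j - t) 0 = 0 := by
        apply Finset.sum_eq_zero
        intro j hj
        rw [mem_filter] at hj
        rw [max_eq_right (by linarith [not_lt.mp hj.2]), mul_zero]
      rw [hz, add_zero, ← hA]
      apply Finset.sum_congr rfl
      intro j hj
      rw [hA, mem_filter] at hj
      rw [max_eq_left (by linarith [hj.2])]
    have hVval : V = (∑ j ∈ A, p j * ξ j) / α + t * (α - a) / α := by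
      rw [hV, hqsum ξ]
      have h1 : ∑ j ∈ A, (p j / α) * ξ j = (∑ j ∈ A, p j * ξ j) / α := by
        rw [Finset.sum_div]; apply Finset.sum_congr rfl; intro j _; ring
      have h2 : ∑ j ∈ B, (p j * c) * ξ j = c * b * t := by
        rw [hb, Finset.mul_sum, Finset.sum_mul]
        apply Finset.sum_congr rfl
        intro j hj
        rw [hB, mem_filter] at hj
        rw [hj.2]; ring
      rw [h1, h2, hcb]
      field_simp
    rw [hVval, hmaxsum]
    have hexp : ∑ j ∈ A, p j * (ξ j - t) = (∑ j ∈ A, p j * ξ j) - t * a := by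
      rw [ha, Finset.mul_sum, ← Finset.sum_sub_distrib]
      apply Finset.sum_congr rfl
      intro j _
      ring
    rw [hexp]
    field_simp
    ring
lemma cvar_weak (n : ℕ) (p ξ : Fin n → ℝ) (hp : ∀ i, 0 ≤ p i) (α : ℝ) (hα0 : 0 < α)
    (q : Fin n → ℝ) (hq0 : ∀ j, 0 ≤ q j) (hq1 : ∑ j, q j = 1) (hqle : ∀ j, q j ≤ p j / α)
    (σ : ℝ) (μp μm : Fin n → ℝ) (hμp : ∀ j, 0 ≤ μp j) (hμm : ∀ j, 0 ≤ μm j)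
    (hfeas : ∀ j, ξ j ≤ -σ - μp j + μm j) :
    ∑ j, q j * ξ j ≤ -σ + (1 / α) * ∑ j, p j * μm j := by
  calc ∑ j, q j * ξ j
      ≤ ∑ j, q j * (-σ + μm j) := by
        apply Finset.sum_le_sum
        intro j _
        apply mul_le_mul_of_nonneg_left _ (hq0 j)
        have := hfeas j
        have := hμp j
        linarith
    _ = -σ * (∑ j, q j) + ∑ j, q j * μm j := by
        rw [Finset.mul_sum, ← Finset.sum_add_distrib]
        apply Finset.sum_congr rfl
        intro j _
        ring
    _ = -σ + ∑ j, q j * μm j := by rw [hq1, mul_one]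
    _ ≤ -σ + (1 / α) * ∑ j, p j * μm j := by
        apply add_le_add_right
        rw [Finset.mul_sum]
        apply Finset.sum_le_sum
        intro j _
        calc q j * μm j ≤ (p j / α) * μm j := mul_le_mul_of_nonneg_right (hqle j) (hμm j)
          _ = 1 / α * (p j * μm j) := by ring

/-- Strong duality for the CVaR linear program: the primal supremum over the CVaR
ambiguity set equals the dual infimum over Lagrange multipliers, and the infimum is
attained. -/
theorem cvar_strong_duality (n : ℕ) (hn : 1 ≤ n) (p ξ : Fin n → ℝ)
    (hp : ∀ i, 0 ≤ p i) (hsum : ∑ i, p i = 1) (α : ℝ) (hα : α ∈ Set.Ioc (0 : ℝ) 1) :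
    sSup {v : ℝ | ∃ q : Fin n → ℝ, (∀ j, 0 ≤ q j) ∧ (∑ j, q j = 1) ∧
        (∀ j, q j ≤ p j / α) ∧ v = ∑ j, q j * ξ j}
      = sInf {v : ℝ | ∃ (σ : ℝ) (μp μm : Fin n → ℝ), (∀ j, 0 ≤ μp j) ∧ (∀ j, 0 ≤ μm j) ∧
          (∀ j, ξ j ≤ -σ - μp j + μm j) ∧ v = -σ + (1 / α) * ∑ j, p j * μm j} ∧
    sInf {v : ℝ | ∃ (σ : ℝ) (μp μm : Fin n → ℝ), (∀ j, 0 ≤ μp j) ∧ (∀ j, 0 ≤ μm j) ∧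
          (∀ j, ξ j ≤ -σ - μp j + μm j) ∧ v = -σ + (1 / α) * ∑ j, p j * μm j}
      ∈ {v : ℝ | ∃ (σ : ℝ) (μp μm : Fin n → ℝ), (∀ j, 0 ≤ μp j) ∧ (∀ j, 0 ≤ μm j) ∧
          (∀ j, ξ j ≤ -σ - μp j + μm j) ∧ v = -σ + (1 / α) * ∑ j, p j * μm j} := by
  obtain ⟨hα0, hα1⟩ := hα
  set P : Set ℝ := {v : ℝ | ∃ q : Fin n → ℝ, (∀ j, 0 ≤ q j) ∧ (∑ j, q j = 1) ∧
        (∀ j, q j ≤ p j / α) ∧ v = ∑ j, q j * ξ j} with hPdef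
  set D : Set ℝ := {v : ℝ | ∃ (σ : ℝ) (μp μm : Fin n → ℝ), (∀ j, 0 ≤ μp j) ∧ (∀ j, 0 ≤ μm j) ∧
          (∀ j, ξ j ≤ -σ - μp j + μm j) ∧ v = -σ + (1 / α) * ∑ j, p j * μm j} with hDdef
  have weak : ∀ v ∈ P, ∀ w ∈ D, v ≤ w := by
    rintro v ⟨q, hq0, hq1, hqle, rfl⟩ w ⟨σ, μp, μm, hμp, hμm, hfeas, rfl⟩
    exact cvar_weak n p ξ hp α hα0 q hq0 hq1 hqle σ μp μm hμp hμm hfeas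
  obtain ⟨V, hVP, hVD⟩ := cvar_exists n hn p ξ hp hsum α hα0 hα1
  have hVP' : V ∈ P := hVP
  have hVD' : V ∈ D := hVD
  have hsupP : sSup P = V := by
    apply le_antisymm
    · exact csSup_le ⟨V, hVP'⟩ (fun v hv => weak v hv V hVD')
    · exact le_csSup ⟨V, fun v hv => weak v hv V hVD'⟩ hVP'
  have hinfD : sInf D = V := by
    apply le_antisymm
    · exact csInf_le ⟨V, fun w hw => weak V hVP' w hw⟩ hVD'
    · exact le_csInf ⟨V, hVD'⟩ (fun w hw => weak V hVP' w hw)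
  exact ⟨by rw [hsupP, hinfD], by rw [hinfD]; exact hVD'⟩
end

section
/- Epigraph characterization of CVaR (core of Theorem 1 of the paper): let n ≥ 1, let p : Fin n → ℝ be a probability vector (p_i ≥ 0, Σ_i p_i = 1), let ξ : Fin n → ℝ, let α ∈ (0,1], and let γ ∈ ℝ. Then γ ≥ CVaR_{1-α}(ξ; p) if and only if there exist σ ∈ ℝ and μ⁺, μ⁻ : Fin n → ℝ with μ⁺_j ≥ 0, μ⁻_j ≥ 0 for all j, such that γ = −σ + (1/α) Σ_j p_j μ⁻_j and ξ_j ≤ −σ − μ⁺_j + μ⁻_j for all j. -/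
open Finset

/-- Discrete CVaR at level `1 - α` as a supremum over the ambiguity set `𝒜_α(p)`. -/
noncomputable def discreteCVaR (n : ℕ) (p ξ : Fin n → ℝ) (α : ℝ) : ℝ :=
  sSup {v : ℝ | ∃ q : Fin n → ℝ, (∀ i, 0 ≤ q i) ∧ (∑ i, q i = 1) ∧
      (∀ i, q i ≤ p i / α) ∧ v = ∑ i, q i * ξ i}

/-- Epigraph characterization of CVaR: `γ ≥ CVaR_{1-α}(ξ; p)` iff there exist dual
multipliers `σ, μ⁺, μ⁻` with `μ⁺ ≥ 0`, `μ⁻ ≥ 0`, `γ = -σ + (1/α) ∑ p_j μ⁻_j` and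
`ξ_j ≤ -σ - μ⁺_j + μ⁻_j` for all `j`. -/
theorem cvar_epigraph_characterization (n : ℕ) (hn : 1 ≤ n) (p ξ : Fin n → ℝ)
    (hp : ∀ i, 0 ≤ p i) (hsum : ∑ i, p i = 1) (α : ℝ) (hα : α ∈ Set.Ioc (0 : ℝ) 1)
    (γ : ℝ) :
    discreteCVaR n p ξ α ≤ γ ↔
      ∃ (σ : ℝ) (μp μm : Fin n → ℝ), (∀ j, 0 ≤ μp j) ∧ (∀ j, 0 ≤ μm j) ∧
        γ = -σ + (1 / α) * ∑ j, p j * μm j ∧ ∀ j, ξ j ≤ -σ - μp j + μm j := by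
  obtain ⟨hα0, hα1⟩ := hα
  have huniv : (univ : Finset (Fin n)).Nonempty := ⟨⟨0, hn⟩, mem_univ _⟩
  set A := {v : ℝ | ∃ q : Fin n → ℝ, (∀ i, 0 ≤ q i) ∧ (∑ i, q i = 1) ∧
      (∀ i, q i ≤ p i / α) ∧ v = ∑ i, q i * ξ i} with hAdef
  have hCV : discreteCVaR n p ξ α = sSup A := rfl
  have hAne : A.Nonempty := by
    refine ⟨∑ i, p i * ξ i, p, hp, hsum, fun i => ?_, rfl⟩
    rw [le_div_iff₀ hα0]
    nlinarith [hp i]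
  have hbdd : BddAbove A := by
    obtain ⟨M, -, hM⟩ := Finset.exists_max_image univ ξ huniv
    refine ⟨ξ M, fun v hv => ?_⟩
    obtain ⟨q, hq0, hq1, hqle, rfl⟩ := hv
    calc ∑ i, q i * ξ i ≤ ∑ i, q i * ξ M :=
          Finset.sum_le_sum fun i _ =>
            mul_le_mul_of_nonneg_left (hM i (mem_univ i)) (hq0 i)
      _ = ξ M := by rw [← Finset.sum_mul, hq1, one_mul]
  rw [hCV]
  constructor
  · intro hle
    -- define the threshold T (an α-quantile)
    set S : ℝ → ℝ := fun t => ∑ j ∈ univ.filter (fun j => t < ξ j), p j with hSdef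
    set K : Finset (Fin n) := univ.filter (fun k => S (ξ k) ≤ α) with hKdef
    have hKne : K.Nonempty := by
      obtain ⟨kmax, -, hkmax⟩ := Finset.exists_max_image univ ξ huniv
      refine ⟨kmax, mem_filter.mpr ⟨mem_univ _, ?_⟩⟩
      have he : univ.filter (fun j => ξ kmax < ξ j) = ∅ := by
        apply Finset.filter_eq_empty_iff.mpr
        intro j _
        exact not_lt.mpr (hkmax j (mem_univ j))
      simp only [hSdef]
      rw [he, Finset.sum_empty]
      exact le_of_lt hα0
    set T : ℝ := (K.image ξ).min' (hKne.image ξ) with hTdef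
    obtain ⟨k0, hk0K, hk0⟩ := Finset.mem_image.mp (Finset.min'_mem (K.image ξ) (hKne.image ξ))
    have hST : S T ≤ α := by rw [← hTdef] at hk0; rw [← hk0]; exact (mem_filter.mp hk0K).2
    have hTmin : ∀ k ∈ K, T ≤ ξ k := fun k hk => Finset.min'_le _ _ (mem_image_of_mem ξ hk)
    have hb : α ≤ ∑ j ∈ univ.filter (fun j => T ≤ ξ j), p j := by
      by_contra h
      push_neg at h
      set L := univ.filter (fun j => ξ j < T) with hLdef
      have hLne : L.Nonempty := by
        rw [Finset.filter_nonempty_iff]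
        by_contra h2
        push_neg at h2
        have hall : univ.filter (fun j => T ≤ ξ j) = univ := by
          apply Finset.filter_true_of_mem
          intro j _
          exact h2 j (mem_univ j)
        rw [hall, hsum] at h
        linarith
      obtain ⟨j', hj'L, hj'max⟩ := Finset.exists_max_image L ξ hLne
      have hj'T : ξ j' < T := (mem_filter.mp hj'L).2
      have hfilter : univ.filter (fun j => ξ j' < ξ j) = univ.filter (fun j => T ≤ ξ j) := by
        ext j
        simp only [mem_filter, mem_univ, true_and]
        constructor
        · intro hj
          by_contra hj2
          push_neg at hj2
          exact absurd (hj'max j (mem_filter.mpr ⟨mem_univ _, hj2⟩)) (not_le.mpr hj)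
        · intro hj
          exact lt_of_lt_of_le hj'T hj
      have hSj' : S (ξ j') ≤ α := by
        simp only [hSdef]
        rw [hfilter]
        exact le_of_lt h
      have : T ≤ ξ j' := hTmin j' (mem_filter.mpr ⟨mem_univ _, hSj'⟩)
      linarith
    -- the sets B (strictly above T) and E (equal to T)
    set B : Finset (Fin n) := univ.filter (fun j => T < ξ j) with hBdef
    set E : Finset (Fin n) := univ.filter (fun j => ξ j = T) with hEdef
    set SB : ℝ := ∑ j ∈ B, p j with hSBdef
    set SE : ℝ := ∑ j ∈ E, p j with hSEdef
    have hSBα : SB ≤ α := hST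
    have hsplit : ∑ j ∈ univ.filter (fun j => T ≤ ξ j), p j = SB + SE := by
      simp only [hSBdef, hSEdef, hBdef, hEdef]
      rw [Finset.sum_filter, Finset.sum_filter, Finset.sum_filter, ← Finset.sum_add_distrib]
      apply Finset.sum_congr rfl
      intro j _
      by_cases h1 : T < ξ j
      · rw [if_pos (le_of_lt h1), if_pos h1, if_neg (ne_of_gt h1)]
        ring
      · by_cases h2 : ξ j = T
        · rw [if_pos (le_of_eq h2.symm), if_neg h1, if_pos h2]
          ring
        · rw [if_neg (not_le.mpr (lt_of_le_of_ne (not_lt.mp h1) h2)), if_neg h1, if_neg h2]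
          ring
    have hbSE : α ≤ SB + SE := by rw [← hsplit]; exact hb
    have hSE0 : 0 ≤ SE := Finset.sum_nonneg fun j _ => hp j
    have hSB0 : 0 ≤ SB := Finset.sum_nonneg fun j _ => hp j
    set r : ℝ := 1 - SB / α with hrdef
    have hr0 : 0 ≤ r := by
      have : SB / α ≤ 1 := (div_le_one hα0).mpr hSBα
      simp only [hrdef]; linarith
    have hrα : r * α ≤ SE := by
      have : r * α = α - SB := by rw [hrdef, sub_mul, div_mul_cancel₀ SB (ne_of_gt hα0), one_mul]
      linarith
    set c : ℝ := r / SE with hcdef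
    have hc0 : 0 ≤ c := div_nonneg hr0 hSE0
    have hcSE : c * SE = r := by
      by_cases hSE : SE = 0
      · have hr0' : r = 0 := by nlinarith
        simp [hcdef, hSE, hr0']
      · simp only [hcdef]
        field_simp
    have hc1 : c ≤ 1 / α := by
      by_cases hSE : SE = 0
      · simp only [hcdef, hSE, div_zero]
        positivity
      · have hSEpos : 0 < SE := lt_of_le_of_ne hSE0 (Ne.symm hSE)
        rw [hcdef, div_le_div_iff₀ hSEpos hα0]
        linarith
    -- the optimal primal q
    set q : Fin n → ℝ := fun j =>
      (if T < ξ j then p j / α else 0) + (if ξ j = T then c * p j else 0) with hqdef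
    have hq0 : ∀ i, 0 ≤ q i := by
      intro i
      apply add_nonneg
      · split_ifs
        · exact div_nonneg (hp i) hα0.le
        · exact le_refl 0
      · split_ifs
        · exact mul_nonneg hc0 (hp i)
        · exact le_refl 0
    have hq1 : ∑ i, q i = 1 := by
      simp only [hqdef]
      rw [Finset.sum_add_distrib, ← Finset.sum_filter, ← Finset.sum_filter,
        ← Finset.sum_div, ← Finset.mul_sum]
      rw [show (univ.filter fun j => T < ξ j) = B from rfl,
        show (univ.filter fun j => ξ j = T) = E from rfl, ← hSBdef, ← hSEdef, hcSE]
      simp only [hrdef]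
      ring
    have hqle : ∀ i, q i ≤ p i / α := by
      intro i
      by_cases h1 : T < ξ i
      · simp only [hqdef, if_pos h1, if_neg (ne_of_gt h1), add_zero, le_refl]
      · by_cases h2 : ξ i = T
        · simp only [hqdef, if_neg h1, if_pos h2, zero_add]
          calc c * p i ≤ (1 / α) * p i := mul_le_mul_of_nonneg_right hc1 (hp i)
            _ = p i / α := by ring
        · simp only [hqdef, if_neg h1, if_neg h2, add_zero]
          exact div_nonneg (hp i) hα0.le
    set V : ℝ := ∑ i, q i * ξ i with hVdef
    have hVA : V ∈ A := ⟨q, hq0, hq1, hqle, rfl⟩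
    have hVγ : V ≤ γ := le_trans (le_csSup hbdd hVA) hle
    have hV : V = (∑ j ∈ B, p j * ξ j) / α + r * T := by
      simp only [hVdef, hqdef]
      have hterm : ∀ i : Fin n,
          ((if T < ξ i then p i / α else 0) + (if ξ i = T then c * p i else 0)) * ξ i
            = (if T < ξ i then p i * ξ i / α else 0) + (if ξ i = T then c * p i * T else 0) := by
        intro i
        by_cases h1 : T < ξ i
        · rw [if_pos h1, if_neg (ne_of_gt h1), if_pos h1, if_neg (ne_of_gt h1)]
          ring
        · by_cases h2 : ξ i = T
          · rw [if_neg h1, if_pos h2, if_neg h1, if_pos h2, h2]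
            ring
          · rw [if_neg h1, if_neg h2, if_neg h1, if_neg h2]
            ring
      rw [Finset.sum_congr rfl fun i _ => hterm i]
      rw [Finset.sum_add_distrib, ← Finset.sum_filter, ← Finset.sum_filter,
        ← Finset.sum_div]
      rw [show (univ.filter fun j => T < ξ j) = B from rfl,
        show (univ.filter fun j => ξ j = T) = E from rfl]
      have : ∑ j ∈ E, c * p j * T = c * SE * T := by
        rw [hSEdef, Finset.mul_sum, Finset.sum_mul]
      rw [this, hcSE]
    -- dual variables
    set δ : ℝ := γ - V with hδdef
    have hδ0 : 0 ≤ δ := by simp only [hδdef]; linarith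
    refine ⟨-(T + δ), fun j => (T + δ) - ξ j + max (ξ j - T) 0,
      fun j => max (ξ j - T) 0, ?_, ?_, ?_, ?_⟩
    · intro j
      have := le_max_left (ξ j - T) 0
      simp only
      linarith
    · intro j
      exact le_max_right _ _
    · have hmax : ∑ j, p j * max (ξ j - T) 0 = ∑ j ∈ B, p j * (ξ j - T) := by
        rw [Finset.sum_filter]
        apply Finset.sum_congr rfl
        intro j _
        by_cases h : T < ξ j
        · rw [if_pos h, max_eq_left (by linarith)]
        · rw [if_neg h, max_eq_right (by linarith [not_lt.mp h]), mul_zero]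
      have hexp : ∑ j ∈ B, p j * (ξ j - T) = (∑ j ∈ B, p j * ξ j) - SB * T := by
        simp only [mul_sub]
        rw [Finset.sum_sub_distrib, ← Finset.sum_mul, ← hSBdef]
      rw [hmax, hexp]
      have hαne : α ≠ 0 := ne_of_gt hα0
      have hγV : γ = V + δ := by simp only [hδdef]; ring
      rw [hγV, hV]
      simp only [hrdef]
      field_simp
      ring
    · intro j
      have h1 : ξ j - T ≤ max (ξ j - T) 0 := le_max_left _ _
      simp only
      linarith
  · rintro ⟨σ, μp, μm, hμp, hμm, hγ, hcon⟩
    apply csSup_le hAne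
    rintro v ⟨q, hq0, hq1, hqle, rfl⟩
    have step1 : ∑ i, q i * ξ i ≤ ∑ i, q i * (-σ + μm i) :=
      Finset.sum_le_sum fun i _ =>
        mul_le_mul_of_nonneg_left (by linarith [hcon i, hμp i]) (hq0 i)
    have step2 : ∑ i, q i * (-σ + μm i) = -σ + ∑ i, q i * μm i := by
      simp only [mul_add]
      rw [Finset.sum_add_distrib, ← Finset.sum_mul, hq1]
      ring
    have step3 : ∑ i, q i * μm i ≤ ∑ i, (p i / α) * μm i :=
      Finset.sum_le_sum fun i _ => mul_le_mul_of_nonneg_right (hqle i) (hμm i)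
    have step4 : ∑ i, (p i / α) * μm i = (1 / α) * ∑ i, p i * μm i := by
      rw [Finset.mul_sum]
      apply Finset.sum_congr rfl
      intro i _
      ring
    calc ∑ i, q i * ξ i ≤ -σ + ∑ i, q i * μm i := by rw [← step2]; exact step1
      _ ≤ -σ + (1 / α) * ∑ i, p i * μm i := by
          rw [← step4]; linarith
      _ = γ := hγ.symm
end
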